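/- arXiv:2305.11743 — 3 statements merged into one kernel-verified Lean document; each statement's English description precedes it below -/
import Mathlib

section
/- Let T = (n_1, ..., n_s) be a vector of positive integers and fix an index i. For u in Ker_Z(T) = {u ∈ Z^s : Σ_j u_j n_j = 0}, let D(u) ∈ Z^{2s-1} be the vector (u_1,...,u_s, -u_1,..., -u_{i-1}, -u_{i+1}, ..., -u_s) (i.e., u followed by the negation of u with its i-th coordinate deleted). If u, v, w ∈ Ker_Z(T) satisfy D(u) = D(v) + D(w) semiconformally, then [u]^i = [v]^i + [w]^i conformally, where [x]^i denotes the vector obtained from x by deleting its i-th component. -/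
open BigOperators

/-- The map `D` sending `u ∈ Ker_Z(T)` to `(u, -[u]^i) ∈ Z^{2s-1}`, where the second
block of coordinates is indexed by the indices different from `i`. -/
def Dmap {s : ℕ} (i : Fin s) (u : Fin s → ℤ) : (Fin s ⊕ {j : Fin s // j ≠ i}) → ℤ :=
  Sum.elim u (fun j => -u j.1)

/-- Semiconformality of a decomposition `v + w`. -/
def SemiConf {ι : Type*} (v w : ι → ℤ) : Prop :=
  ∀ l, (0 < v l → 0 ≤ w l) ∧ (w l < 0 → v l ≤ 0)

/-- If `D(u) = D(v) + D(w)` semiconformally, then `[u]^i = [v]^i + [w]^i` conformally. -/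
theorem stmt2 {s : ℕ} (T : Fin s → ℕ) (hT : ∀ l, 0 < T l) (i : Fin s)
    (u v w : Fin s → ℤ)
    (hu : ∑ l, u l * (T l : ℤ) = 0)
    (hv : ∑ l, v l * (T l : ℤ) = 0)
    (hw : ∑ l, w l * (T l : ℤ) = 0)
    (hsum : Dmap i u = Dmap i v + Dmap i w)
    (hsc : SemiConf (Dmap i v) (Dmap i w)) :
    ∀ j : Fin s, j ≠ i →
      (u j = v j + w j ∧
       max (u j) 0 = max (v j) 0 + max (w j) 0 ∧
       max (-(u j)) 0 = max (-(v j)) 0 + max (-(w j)) 0) := by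
  intro j hj
  have h1 := congrFun hsum (Sum.inl j)
  have h2 := hsc (Sum.inl j)
  have h3 := hsc (Sum.inr ⟨j, hj⟩)
  simp only [Dmap, Sum.elim_inl, Sum.elim_inr, Pi.add_apply] at h1 h2 h3
  omega
end

section
/- Let T = (n_1,...,n_s) be positive integers with s ≥ 3 and gcd(n_1,...,n_s)=1, and let i ≠ j be two indices. Define D_{ij}: Ker_Z(T) → Z^{2s-2} by D_{ij}(u) = (u, -[u]^{ij}), where [u]^{ij} deletes the i-th and j-th coordinates. Then there exists u ∈ Ker_Z(T) which is a circuit (support of size 2) such that D_{ij}(u) is in the Graver basis of the lattice {D_{ij}(v) : v ∈ Ker_Z(T)} but admits a proper semiconformal decomposition D_{ij}(u) = D_{ij}(v) + D_{ij}(w) with v, w nonzero. In particular the lattice {D_{ij}(v) : v ∈ Ker_Z(T)} is not strongly robust (its Graver basis is not equal to its set of indispensable elements). -/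
open BigOperators

/-- The map `D_{ij}` sending `u ∈ Ker_Z(T)` to `(u, -[u]^{ij})`, where the second block
deletes the `i`-th and `j`-th coordinates. -/
def Dmap2 {s : ℕ} (i j : Fin s) (u : Fin s → ℤ) :
    (Fin s ⊕ {l : Fin s // l ≠ i ∧ l ≠ j}) → ℤ :=
  Sum.elim u (fun l => -u l.1)

/-- Conformality of a decomposition `x = y + z`: `x⁺ = y⁺ + z⁺` and `x⁻ = y⁻ + z⁻`. -/
def Conf {ι : Type*} (x y z : ι → ℤ) : Prop :=
  x = y + z ∧ ∀ l, max (x l) 0 = max (y l) 0 + max (z l) 0 ∧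
    max (-(x l)) 0 = max (-(y l)) 0 + max (-(z l)) 0

lemma sign_lemma {x y z : ℤ} (h1 : max x 0 = max y 0 + max z 0)
    (h2 : max (-x) 0 = max (-y) 0 + max (-z) 0) :
    (0 ≤ x → 0 ≤ y ∧ 0 ≤ z) ∧ (x ≤ 0 → y ≤ 0 ∧ z ≤ 0) := by
  constructor
  · intro hx
    have h2' : max (-x) 0 = 0 := max_eq_right (by linarith)
    rw [h2'] at h2
    have a1 : 0 ≤ max (-y) 0 := le_max_right _ _
    have a2 : 0 ≤ max (-z) 0 := le_max_right _ _
    have b1 : -y ≤ max (-y) 0 := le_max_left _ _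
    have b2 : -z ≤ max (-z) 0 := le_max_left _ _
    constructor <;> linarith
  · intro hx
    have h1' : max x 0 = 0 := max_eq_right hx
    rw [h1'] at h1
    have a1 : 0 ≤ max y 0 := le_max_right _ _
    have a2 : 0 ≤ max z 0 := le_max_right _ _
    have b1 : y ≤ max y 0 := le_max_left _ _
    have b2 : z ≤ max z 0 := le_max_left _ _
    constructor <;> linarith

lemma aux {s : ℕ} (n : Fin s → ℕ) (hn : ∀ l, 0 < n l) (i j a b k : Fin s)
    (hab : a ≠ b) (hak : a ≠ k) (hbk : b ≠ k)
    (hset : (a = i ∧ b = j) ∨ (a = j ∧ b = i))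
    (hle : n b / Nat.gcd (n b) (n k) ≤ n a / Nat.gcd (n a) (n k)) :
    ∃ u : Fin s → ℤ,
      (∑ l, u l * (n l : ℤ) = 0) ∧
      (Finset.univ.filter (fun l => u l ≠ 0)).card = 2 ∧
      (Dmap2 i j u ≠ 0 ∧
        ¬ ∃ v w : Fin s → ℤ,
            (∑ l, v l * (n l : ℤ) = 0) ∧ (∑ l, w l * (n l : ℤ) = 0) ∧
            v ≠ 0 ∧ w ≠ 0 ∧ Conf (Dmap2 i j u) (Dmap2 i j v) (Dmap2 i j w)) ∧
      (∃ v w : Fin s → ℤ,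
        (∑ l, v l * (n l : ℤ) = 0) ∧ (∑ l, w l * (n l : ℤ) = 0) ∧
        v ≠ 0 ∧ w ≠ 0 ∧
        Dmap2 i j u = Dmap2 i j v + Dmap2 i j w ∧
        SemiConf (Dmap2 i j v) (Dmap2 i j w)) := by
  -- gcd setup for the pair (a, k)
  set g := Nat.gcd (n a) (n k) with hgdef
  have hg : 0 < g := Nat.gcd_pos_of_pos_left _ (hn a)
  obtain ⟨p, hp⟩ : g ∣ n a := Nat.gcd_dvd_left _ _
  obtain ⟨q, hq⟩ : g ∣ n k := Nat.gcd_dvd_right _ _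
  have hpdiv : n a / g = p := by rw [hp]; exact Nat.mul_div_cancel_left p hg
  have hqdiv : n k / g = q := by rw [hq]; exact Nat.mul_div_cancel_left q hg
  have cop : Nat.Coprime p q := by
    have := Nat.coprime_div_gcd_div_gcd (m := n a) (n := n k) hg
    rwa [← hgdef, hpdiv, hqdiv] at this
  have hp0 : 0 < p := by
    rcases Nat.eq_zero_or_pos p with h0 | h0
    · exfalso; have := hn a; rw [hp, h0] at this; omega
    · exact h0
  have hq0 : 0 < q := by
    rcases Nat.eq_zero_or_pos q with h0 | h0
    · exfalso; have := hn k; rw [hq, h0] at this; omega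
    · exact h0
  -- gcd setup for the pair (b, k)
  set h' := Nat.gcd (n b) (n k) with hh'def
  have hh : 0 < h' := Nat.gcd_pos_of_pos_left _ (hn b)
  obtain ⟨r, hr⟩ : h' ∣ n b := Nat.gcd_dvd_left _ _
  obtain ⟨t, ht⟩ : h' ∣ n k := Nat.gcd_dvd_right _ _
  have hrdiv : n b / h' = r := by rw [hr]; exact Nat.mul_div_cancel_left r hh
  have hr0 : 0 < r := by
    rcases Nat.eq_zero_or_pos r with h0 | h0
    · exfalso; have := hn b; rw [hr, h0] at this; omega
    · exact h0
  have ht0 : 0 < t := by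
    rcases Nat.eq_zero_or_pos t with h0 | h0
    · exfalso; have := hn k; rw [ht, h0] at this; omega
    · exact h0
  have hrp : r ≤ p := by rwa [hrdiv, hpdiv] at hle
  -- casts
  have hpZ : (n a : ℤ) = (g : ℤ) * p := by exact_mod_cast hp
  have hqZ : (n k : ℤ) = (g : ℤ) * q := by exact_mod_cast hq
  have hrZ : (n b : ℤ) = (h' : ℤ) * r := by exact_mod_cast hr
  have htZ : (n k : ℤ) = (h' : ℤ) * t := by exact_mod_cast ht
  have hka : k ≠ a := hak.symm
  have hkb : k ≠ b := hbk.symm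
  have hba : b ≠ a := hab.symm
  -- the circuit u on {a, k}
  set u : Fin s → ℤ := fun l => if l = a then (q : ℤ) else if l = k then -(p : ℤ) else 0
    with hudef
  have hua : u a = q := by simp [hudef]
  have huk : u k = -(p : ℤ) := by simp [hudef, hka]
  have huo : ∀ l, l ≠ a → l ≠ k → u l = 0 := by
    intro l h1 h2; simp [hudef, h1, h2]
  -- sum lemma for functions supported on {a, k}
  have sumak : ∀ f : Fin s → ℤ, (∀ l, l ≠ a → l ≠ k → f l = 0) →
      ∑ l, f l * (n l : ℤ) = f a * n a + f k * n k := by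
    intro f hf
    rw [← Finset.sum_subset (Finset.subset_univ {a, k})
      (fun x _ hx => by
        simp only [Finset.mem_insert, Finset.mem_singleton] at hx
        push_neg at hx
        rw [hf x hx.1 hx.2, zero_mul])]
    exact Finset.sum_pair hak
  have huker : ∑ l, u l * (n l : ℤ) = 0 := by
    rw [sumak u huo, hua, huk, hpZ, hqZ]; ring
  refine ⟨u, huker, ?_, ⟨?_, ?_⟩, ?_⟩
  · -- support card = 2
    have : Finset.univ.filter (fun l => u l ≠ 0) = {a, k} := by
      ext l
      simp only [Finset.mem_filter, Finset.mem_univ, true_and, Finset.mem_insert,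
        Finset.mem_singleton]
      constructor
      · intro hl
        by_contra hc
        push_neg at hc
        exact hl (huo l hc.1 hc.2)
      · rintro (rfl | rfl)
        · rw [hua]; positivity
        · rw [huk]; simp; omega
    rw [this]; exact Finset.card_pair hak
  · -- Dmap2 u ≠ 0
    intro hzero
    have := congrFun hzero (Sum.inl a)
    simp [Dmap2, hua] at this
    omega
  · -- Graver: no conformal decomposition
    rintro ⟨v, w, hvker, hwker, hv0, hw0, hconf⟩
    have hsum : ∀ l, u l = v l + w l := by
      intro l
      have := congrFun hconf.1 (Sum.inl l)
      simpa [Dmap2] using this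
    have hsign : ∀ l, (0 ≤ u l → 0 ≤ v l ∧ 0 ≤ w l) ∧ (u l ≤ 0 → v l ≤ 0 ∧ w l ≤ 0) := by
      intro l
      have hm := hconf.2 (Sum.inl l)
      simp only [Dmap2, Sum.elim_inl] at hm
      exact sign_lemma hm.1 hm.2
    have hvz : ∀ l, l ≠ a → l ≠ k → v l = 0 := by
      intro l h1 h2
      have h0 : u l = 0 := huo l h1 h2
      have hA := (hsign l).1 (by rw [h0])
      have hB := (hsign l).2 (by rw [h0])
      linarith [hA.1, hB.1]
    have hwz : ∀ l, l ≠ a → l ≠ k → w l = 0 := by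
      intro l h1 h2
      have h0 : u l = 0 := huo l h1 h2
      have hA := (hsign l).1 (by rw [h0])
      have hB := (hsign l).2 (by rw [h0])
      linarith [hA.2, hB.2]
    have hva : 0 ≤ v a := ((hsign a).1 (by rw [hua]; positivity)).1
    have hwa : 0 ≤ w a := ((hsign a).1 (by rw [hua]; positivity)).2
    -- kernel restricted
    have hvker' : v a * (n a : ℤ) + v k * n k = 0 := by
      rw [← sumak v hvz]; exact hvker
    have hwker' : w a * (n a : ℤ) + w k * n k = 0 := by
      rw [← sumak w hwz]; exact hwker
    -- v a * p = - v k * q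
    have hgZ : (0:ℤ) < (g:ℤ) := by exact_mod_cast hg
    have hkey : v a * p = - (v k * q) := by
      have h0 : (g:ℤ) * (v a * p + v k * q) = 0 := by
        rw [hpZ, hqZ] at hvker'; linear_combination hvker'
      rcases mul_eq_zero.mp h0 with h0 | h0
      · exfalso; omega
      · linarith
    have copZ : IsCoprime (q : ℤ) (p : ℤ) := by
      rw [Int.isCoprime_iff_gcd_eq_one]
      simpa [Int.gcd] using cop.symm
    have hdvd : (q : ℤ) ∣ v a := by
      have : (q : ℤ) ∣ v a * p := ⟨-(v k), by linarith [hkey]⟩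
      exact copZ.dvd_of_dvd_mul_right this
    obtain ⟨m, hm⟩ := hdvd
    have hqpos : (0:ℤ) < (q:ℤ) := by exact_mod_cast hq0
    have hqZ0 : (q : ℤ) ≠ 0 := ne_of_gt hqpos
    have hvk : v k = -(m * p) := by
      have h2 : (q:ℤ) * (m * p + v k) = 0 := by linear_combination hkey - (p:ℤ) * hm
      rcases mul_eq_zero.mp h2 with h0 | h0
      · exact absurd h0 hqZ0
      · linarith
    have hm0 : 0 ≤ m := by
      by_contra hc
      push_neg at hc
      have : v a < 0 := by rw [hm]; exact mul_neg_of_pos_of_neg hqpos hc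
      linarith
    have hwa' : w a = (q:ℤ) * (1 - m) := by
      have := hsum a
      rw [hua, hm] at this
      linarith
    have hm1 : m ≤ 1 := by
      by_contra hc
      push_neg at hc
      have : w a < 0 := by rw [hwa']; exact mul_neg_of_pos_of_neg hqpos (by linarith)
      linarith
    interval_cases m
    · -- v = 0
      apply hv0
      funext l
      by_cases h1 : l = a
      · rw [h1]; simpa using hm
      by_cases h2 : l = k
      · rw [h2]; simpa using hvk
      · exact hvz l h1 h2
    · -- w = 0
      apply hw0
      have hva' : v a = q := by rw [hm]; ring
      have hvk' : v k = -(p:ℤ) := by rw [hvk]; ring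
      funext l
      by_cases h1 : l = a
      · rw [h1]; simp [hwa']
      by_cases h2 : l = k
      · rw [h2]
        have h6 := hsum k
        rw [huk, hvk'] at h6
        simp only [Pi.zero_apply]
        linarith
      · exact hwz l h1 h2
  · -- semiconformal decomposition
    set w : Fin s → ℤ := fun l => if l = b then (t : ℤ) else if l = k then -(r : ℤ) else 0
      with hwdef
    set v : Fin s → ℤ := fun l =>
      if l = a then (q : ℤ) else if l = b then -(t : ℤ) else if l = k then (r : ℤ) - p else 0
      with hvdef
    have hwb : w b = t := by simp [hwdef]
    have hwk : w k = -(r : ℤ) := by simp [hwdef, hkb]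
    have hwa : w a = 0 := by simp [hwdef, hab, hak]
    have hwo : ∀ l, l ≠ b → l ≠ k → w l = 0 := by intro l h1 h2; simp [hwdef, h1, h2]
    have hva : v a = q := by simp [hvdef]
    have hvb : v b = -(t:ℤ) := by simp [hvdef, hba]
    have hvk : v k = (r:ℤ) - p := by simp [hvdef, hka, hkb]
    have hvo : ∀ l, l ≠ a → l ≠ b → l ≠ k → v l = 0 := by
      intro l h1 h2 h3; simp [hvdef, h1, h2, h3]
    have hwker : ∑ l, w l * (n l : ℤ) = 0 := by
      rw [← Finset.sum_subset (Finset.subset_univ {b, k})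
        (fun x _ hx => by
          simp only [Finset.mem_insert, Finset.mem_singleton] at hx
          push_neg at hx
          rw [hwo x hx.1 hx.2, zero_mul]),
        Finset.sum_pair hbk, hwb, hwk, hrZ, htZ]
      ring
    have hvw : ∀ l, v l = u l - w l := by
      intro l
      by_cases h1 : l = a
      · rw [h1, hva, hua, hwa]; ring
      by_cases h2 : l = b
      · rw [h2, hvb, hwb, huo b hba hbk]; ring
      by_cases h3 : l = k
      · rw [h3, hvk, huk, hwk]; ring
      · rw [hvo l h1 h2 h3, huo l h1 h3, hwo l h2 h3]; ring
    have hvker : ∑ l, v l * (n l : ℤ) = 0 := by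
      calc ∑ l, v l * (n l : ℤ) = ∑ l, (u l * n l - w l * n l) := by
            apply Finset.sum_congr rfl
            intro l _
            rw [hvw l, sub_mul]
        _ = 0 := by rw [Finset.sum_sub_distrib, huker, hwker, sub_zero]
    have htZ0 : (0:ℤ) < (t:ℤ) := by exact_mod_cast ht0
    have hrZ0 : (0:ℤ) < (r:ℤ) := by exact_mod_cast hr0
    have hqZ0 : (0:ℤ) < (q:ℤ) := by exact_mod_cast hq0
    have hrpZ : (r:ℤ) ≤ p := by exact_mod_cast hrp
    refine ⟨v, w, hvker, hwker, ?_, ?_, ?_, ?_⟩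
    · intro h0
      have := congrFun h0 b
      rw [hvb] at this
      simp at this
      omega
    · intro h0
      have := congrFun h0 b
      rw [hwb] at this
      simp at this
      omega
    · funext x
      rcases x with l | ⟨l, hl⟩
      · simp only [Dmap2, Sum.elim_inl, Pi.add_apply]
        rw [hvw l]; ring
      · simp only [Dmap2, Sum.elim_inr, Pi.add_apply]
        rw [hvw l]; ring
    · intro x
      rcases x with l | ⟨l, hl1, hl2⟩
      · simp only [Dmap2, Sum.elim_inl]
        by_cases h1 : l = a
        · rw [h1, hva, hwa]; constructor <;> intro <;> omega
        by_cases h2 : l = b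
        · rw [h2, hvb, hwb]; constructor <;> intro <;> omega
        by_cases h3 : l = k
        · rw [h3, hvk, hwk]; constructor <;> intro <;> omega
        · rw [hvo l h1 h2 h3, hwo l h2 h3]; constructor <;> intro <;> omega
      · simp only [Dmap2, Sum.elim_inr]
        have h1 : l ≠ a := by rcases hset with ⟨ha, hb⟩ | ⟨ha, hb⟩ <;> rw [ha] <;>
          first | exact hl1 | exact hl2
        have h2 : l ≠ b := by rcases hset with ⟨ha, hb⟩ | ⟨ha, hb⟩ <;> rw [hb] <;>
          first | exact hl2 | exact hl1
        by_cases h3 : l = k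
        · rw [h3, hvk, hwk]; constructor <;> intro <;> omega
        · rw [hvo l h1 h2 h3, hwo l h2 h3]; constructor <;> intro <;> omega


/-- For any two indices `i ≠ j`, the lattice `{D_{ij}(v)}` is not strongly robust:
some circuit maps to a Graver element which is not indispensable. -/
theorem stmt13 {s : ℕ} (hs : 3 ≤ s) (n : Fin s → ℕ) (hn : ∀ l, 0 < n l)
    (hg : Finset.univ.gcd n = 1)
    (i j : Fin s) (hij : i ≠ j) :
    ∃ u : Fin s → ℤ,
      (∑ l, u l * (n l : ℤ) = 0) ∧
      (Finset.univ.filter (fun l => u l ≠ 0)).card = 2 ∧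
      -- D_{ij}(u) is in the Graver basis of the lattice {D_{ij}(v) : v ∈ Ker_Z(T)}
      (Dmap2 i j u ≠ 0 ∧
        ¬ ∃ v w : Fin s → ℤ,
            (∑ l, v l * (n l : ℤ) = 0) ∧ (∑ l, w l * (n l : ℤ) = 0) ∧
            v ≠ 0 ∧ w ≠ 0 ∧ Conf (Dmap2 i j u) (Dmap2 i j v) (Dmap2 i j w)) ∧
      -- but D_{ij}(u) admits a proper semiconformal decomposition
      (∃ v w : Fin s → ℤ,
        (∑ l, v l * (n l : ℤ) = 0) ∧ (∑ l, w l * (n l : ℤ) = 0) ∧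
        v ≠ 0 ∧ w ≠ 0 ∧
        Dmap2 i j u = Dmap2 i j v + Dmap2 i j w ∧
        SemiConf (Dmap2 i j v) (Dmap2 i j w)) := by
  -- pick a third index k ∉ {i, j}
  obtain ⟨k, hki, hkj⟩ : ∃ k : Fin s, k ≠ i ∧ k ≠ j := by
    have h : ({i, j} : Finset (Fin s)).card < (Finset.univ : Finset (Fin s)).card := by
      have h1 : ({i, j} : Finset (Fin s)).card ≤ 2 :=
        (Finset.card_insert_le _ _).trans (by simp)
      have h2 : (Finset.univ : Finset (Fin s)).card = s := by simp
      omega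
    have hne : ({i, j} : Finset (Fin s)) ≠ Finset.univ := by
      intro he; rw [he] at h; omega
    obtain ⟨k, -, hk⟩ := Finset.exists_of_ssubset
      ((Finset.subset_univ _).ssubset_of_ne hne)
    exact ⟨k, by simpa using hk⟩
  rcases le_total (n i / Nat.gcd (n i) (n k)) (n j / Nat.gcd (n j) (n k)) with hle | hle
  · exact aux n hn i j j i k hij.symm hkj.symm hki.symm (Or.inr ⟨rfl, rfl⟩) hle
  · exact aux n hn i j i j k hij hki.symm hkj.symm (Or.inl ⟨rfl, rfl⟩) hle
end

section
/- Let n_i, n_j, n_k be positive integers, let c_j be the least positive integer such that c_j·n_j lies in the numerical semigroup generated by n_k and n_i, and suppose c_j·n_j = e·n_i for some positive integer e. Then gcd(c_j, e) = 1, and consequently c_j divides n_i and e divides n_j. -/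
/-- Membership in the numerical semigroup generated by `a` and `b`. -/
def InSg (a b x : ℕ) : Prop := ∃ p q : ℕ, x = p * a + q * b

/-- If `c_j` is the least positive integer with `c_j·n_j ∈ ⟨n_k, n_i⟩` and
`c_j·n_j = e·n_i` for a positive integer `e`, then `gcd(c_j, e) = 1`, `c_j ∣ n_i` and
`e ∣ n_j`. -/
theorem stmt19 (ni nj nk cj e : ℕ)
    (hni : 0 < ni) (hnj : 0 < nj) (hnk : 0 < nk)
    (hcj : 0 < cj) (hcjmem : InSg nk ni (cj * nj))
    (hmin : ∀ c', 0 < c' → InSg nk ni (c' * nj) → cj ≤ c')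
    (he : 0 < e) (heq : cj * nj = e * ni) :
    Nat.gcd cj e = 1 ∧ cj ∣ ni ∧ e ∣ nj := by
  set d := Nat.gcd cj e with hd
  have hdpos : 0 < d := Nat.gcd_pos_of_pos_left e hcj
  obtain ⟨c', hc'⟩ := Nat.gcd_dvd_left cj e
  obtain ⟨e', he'⟩ := Nat.gcd_dvd_right cj e
  have hc'pos : 0 < c' := by
    rcases Nat.eq_zero_or_pos c' with h | h
    · simp [h] at hc'; omega
    · exact h
  have heq' : c' * nj = e' * ni := by
    have : d * (c' * nj) = d * (e' * ni) := by
      calc d * (c' * nj) = (d * c') * nj := by ring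
        _ = cj * nj := by rw [← hc']
        _ = e * ni := heq
        _ = (d * e') * ni := by rw [← he']
        _ = d * (e' * ni) := by ring
    exact Nat.eq_of_mul_eq_mul_left hdpos this
  have hmem' : InSg nk ni (c' * nj) := ⟨0, e', by simp [heq']⟩
  have hle : cj ≤ c' := hmin c' hc'pos hmem'
  have hd1 : d = 1 := by
    nlinarith [hc', hle, hdpos, hc'pos]
  refine ⟨hd1, ?_, ?_⟩
  · have hco : Nat.Coprime cj e := hd1
    exact (Nat.Coprime.dvd_of_dvd_mul_left hco ⟨nj, heq.symm⟩)
  · have hco : Nat.Coprime e cj := Nat.coprime_comm.mp hd1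
    exact (Nat.Coprime.dvd_of_dvd_mul_left hco ⟨ni, heq⟩)
end
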